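/- Equivariant diffeomorphism between the two cylinder actions (Example 2.10): let n ≥ 2 and 1 ≤ k ≤ n−1, and consider on the cylinder Z^{2n} ⊆ ℂ^n the two ℝ^k-actions φ₁(t,z) = (e^{2it₁}z₁, …, e^{2it_k}z_k, z_{k+1}, …, z_n) and φ₂(t,z) = (z₁, e^{2it₁}z₂, …, e^{2it_k}z_{k+1}, z_{k+2}, …, z_n). Then there exists a bijective map ρ : Z^{2n} → Z^{2n}, C^∞ with C^∞ inverse, such that ρ(φ₁(t,z)) = φ₂(t, ρ(z)) for all t ∈ ℝ^k and z ∈ Z^{2n}; that is, (Z^{2n}, φ₁) and (Z^{2n}, φ₂) are ℝ^k-equivariantly diffeomorphic. -/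

import Mathlib

/-!
Statement 3: The two standard ℝ^k-actions φ₁, φ₂ on the cylinder Z^{2n} ⊆ ℂ^n
(n ≥ 2, 1 ≤ k ≤ n-1) are ℝ^k-equivariantly diffeomorphic: there is a bijective map
ρ : Z^{2n} → Z^{2n}, C^∞ with C^∞ inverse, with ρ(φ₁(t,z)) = φ₂(t, ρ(z)).
-/

noncomputable section

/-- The action `φ₁` of `ℝ^k` on `ℂ^n`: rotation of the first `k` coordinates,
`φ₁(t,z) = (e^{2it₁}z₁, …, e^{2it_k}z_k, z_{k+1}, …, z_n)`. -/
def actOne (k : ℕ) {n : ℕ} (t : Fin k → ℝ) (z : EuclideanSpace ℂ (Fin n)) :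
    EuclideanSpace ℂ (Fin n) :=
  WithLp.toLp 2 (fun i : Fin n => if h : (i : ℕ) < k then
    Complex.exp ((2 * t ⟨i, h⟩ : ℝ) * Complex.I) * z i
  else z i)

/-- The action `φ₂` of `ℝ^k` on `ℂ^n`: rotation of coordinates `2, …, k+1`,
`φ₂(t,z) = (z₁, e^{2it₁}z₂, …, e^{2it_k}z_{k+1}, z_{k+2}, …, z_n)`. -/
def actTwo (k : ℕ) {n : ℕ} (t : Fin k → ℝ) (z : EuclideanSpace ℂ (Fin n)) :
    EuclideanSpace ℂ (Fin n) :=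
  WithLp.toLp 2 (fun i : Fin n => if h : 1 ≤ (i : ℕ) ∧ (i : ℕ) ≤ k then
    Complex.exp ((2 * t ⟨(i : ℕ) - 1, by omega⟩ : ℝ) * Complex.I) * z i
  else z i)

/-- The open cylinder `Z^{2n} = {z ∈ ℂ^n : |z₁| < 1}`. -/
def cylinder (n : ℕ) : Set (EuclideanSpace ℂ (Fin n)) :=
  {z | ∀ i : Fin n, (i : ℕ) = 0 → ‖z i‖ < 1}

/-! Auxiliary disk/plane diffeos. -/

def fMap (w : ℂ) : ℂ := ((Real.sqrt (1 - Complex.normSq w))⁻¹ : ℝ) * w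
def gMap (w : ℂ) : ℂ := ((Real.sqrt (1 + Complex.normSq w))⁻¹ : ℝ) * w

lemma contDiff_normSq : ContDiff ℝ (⊤ : ℕ∞) (fun w : ℂ => Complex.normSq w) := by
  have : (fun w : ℂ => Complex.normSq w) = fun w : ℂ => w.re * w.re + w.im * w.im := by
    funext w; exact Complex.normSq_apply w
  rw [this]
  exact (Complex.reCLM.contDiff.mul Complex.reCLM.contDiff).add
    (Complex.imCLM.contDiff.mul Complex.imCLM.contDiff)

lemma gMap_contDiff : ContDiff ℝ (⊤ : ℕ∞) gMap := by
  rw [contDiff_iff_contDiffAt]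
  intro w
  have hpos : 0 < 1 + Complex.normSq w := by
    have := Complex.normSq_nonneg w; linarith
  have h1 : ContDiffAt ℝ (⊤ : ℕ∞) (fun w : ℂ => 1 + Complex.normSq w) w :=
    (contDiff_const.add contDiff_normSq).contDiffAt
  have h2 : ContDiffAt ℝ (⊤ : ℕ∞) Real.sqrt (1 + Complex.normSq w) :=
    Real.contDiffAt_sqrt hpos.ne'
  have h3 := (h2.comp w h1).inv
    (by simp only [Function.comp_apply]; exact (Real.sqrt_pos.2 hpos).ne')
  have h4 := Complex.ofRealCLM.contDiff.contDiffAt.comp w h3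
  exact h4.mul contDiffAt_id

lemma fMap_contDiffAt {w : ℂ} (h : Complex.normSq w < 1) : ContDiffAt ℝ (⊤ : ℕ∞) fMap w := by
  have hpos : 0 < 1 - Complex.normSq w := by linarith
  have h1 : ContDiffAt ℝ (⊤ : ℕ∞) (fun w : ℂ => 1 - Complex.normSq w) w :=
    (contDiff_const.sub contDiff_normSq).contDiffAt
  have h2 : ContDiffAt ℝ (⊤ : ℕ∞) Real.sqrt (1 - Complex.normSq w) :=
    Real.contDiffAt_sqrt hpos.ne'
  have h3 := (h2.comp w h1).inv
    (by simp only [Function.comp_apply]; exact (Real.sqrt_pos.2 hpos).ne')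
  have h4 := Complex.ofRealCLM.contDiff.contDiffAt.comp w h3
  exact h4.mul contDiffAt_id

lemma gMap_fMap {z : ℂ} (h : Complex.normSq z < 1) : gMap (fMap z) = z := by
  have h1 : (0:ℝ) < 1 - Complex.normSq z := by linarith
  have hsr : Real.sqrt (1 - Complex.normSq z) * Real.sqrt (1 - Complex.normSq z)
      = 1 - Complex.normSq z := Real.mul_self_sqrt h1.le
  have hsp : 0 < Real.sqrt (1 - Complex.normSq z) := Real.sqrt_pos.2 h1
  have hns : Complex.normSq (fMap z) = Complex.normSq z / (1 - Complex.normSq z) := by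
    unfold fMap
    rw [Complex.normSq_mul, Complex.normSq_ofReal, ← mul_inv, hsr]
    field_simp
  unfold gMap
  rw [hns]
  have h2 : 1 + Complex.normSq z / (1 - Complex.normSq z) = (1 - Complex.normSq z)⁻¹ := by
    field_simp
    ring
  rw [h2, Real.sqrt_inv, inv_inv]
  unfold fMap
  rw [← mul_assoc, ← Complex.ofReal_mul, mul_inv_cancel₀ hsp.ne']
  simp

lemma fMap_gMap (w : ℂ) : fMap (gMap w) = w := by
  have hpos : (0:ℝ) < 1 + Complex.normSq w := by
    have := Complex.normSq_nonneg w; linarith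
  have hsr : Real.sqrt (1 + Complex.normSq w) * Real.sqrt (1 + Complex.normSq w)
      = 1 + Complex.normSq w := Real.mul_self_sqrt hpos.le
  have hsp : 0 < Real.sqrt (1 + Complex.normSq w) := Real.sqrt_pos.2 hpos
  have hns : Complex.normSq (gMap w) = Complex.normSq w / (1 + Complex.normSq w) := by
    unfold gMap
    rw [Complex.normSq_mul, Complex.normSq_ofReal, ← mul_inv, hsr]
    field_simp
  unfold fMap
  rw [hns]
  have h2 : 1 - Complex.normSq w / (1 + Complex.normSq w) = (1 + Complex.normSq w)⁻¹ := by
    field_simp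
    ring
  rw [h2, Real.sqrt_inv, inv_inv]
  unfold gMap
  rw [← mul_assoc, ← Complex.ofReal_mul, mul_inv_cancel₀ hsp.ne']
  simp

lemma abs_gMap_lt (w : ℂ) : ‖gMap w‖ < 1 := by
  have hpos : (0:ℝ) < 1 + Complex.normSq w := by
    have := Complex.normSq_nonneg w; linarith
  have h1 : Complex.normSq (gMap w) = Complex.normSq w / (1 + Complex.normSq w) := by
    unfold gMap
    rw [Complex.normSq_mul, Complex.normSq_ofReal, ← mul_inv,
      Real.mul_self_sqrt hpos.le]
    field_simp
  have h2 : Complex.normSq (gMap w) < 1 := by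
    rw [h1, div_lt_one hpos]; linarith
  rw [Complex.norm_def]
  calc Real.sqrt (Complex.normSq (gMap w)) < Real.sqrt 1 :=
        Real.sqrt_lt_sqrt (Complex.normSq_nonneg _) h2
    _ = 1 := Real.sqrt_one

lemma normSq_lt_one_of_abs {z : ℂ} (h : ‖z‖ < 1) : Complex.normSq z < 1 := by
  have h0 := norm_nonneg z
  rw [Complex.normSq_eq_norm_sq]
  nlinarith

lemma fMap_unit_mul {c : ℂ} (hc : Complex.normSq c = 1) (z : ℂ) :
    fMap (c * z) = c * fMap z := by
  unfold fMap; rw [Complex.normSq_mul, hc, one_mul]; ring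

lemma gMap_unit_mul {c : ℂ} (hc : Complex.normSq c = 1) (z : ℂ) :
    gMap (c * z) = c * gMap z := by
  unfold gMap; rw [Complex.normSq_mul, hc, one_mul]; ring

lemma normSq_exp_mul_I (θ : ℝ) : Complex.normSq (Complex.exp ((θ:ℝ) * Complex.I)) = 1 := by
  rw [Complex.normSq_eq_norm_sq, Complex.norm_exp_ofReal_mul_I]; norm_num

/-! The equivariant diffeomorphism and its inverse. -/

def rhoMap {n : ℕ} (k : ℕ) (h : k < n) (z : EuclideanSpace ℂ (Fin n)) :
    EuclideanSpace ℂ (Fin n) :=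
  WithLp.toLp 2 (fun i : Fin n => if (i : ℕ) = 0 then gMap (z ⟨k, h⟩)
    else if (i : ℕ) = 1 then fMap (z ⟨0, Nat.lt_of_le_of_lt (Nat.zero_le k) h⟩)
    else if (i : ℕ) ≤ k then z ⟨(i : ℕ) - 1, Nat.lt_of_le_of_lt (Nat.sub_le _ _) i.isLt⟩
    else z i)

def sigmaMap {n : ℕ} (k : ℕ) (h : k < n) (hk : 1 ≤ k) (w : EuclideanSpace ℂ (Fin n)) :
    EuclideanSpace ℂ (Fin n) :=
  WithLp.toLp 2 (fun i : Fin n => if (i : ℕ) = 0 then gMap (w ⟨1, Nat.lt_of_le_of_lt hk h⟩)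
    else if (i : ℕ) = k then fMap (w ⟨0, Nat.lt_of_le_of_lt (Nat.zero_le k) h⟩)
    else if h2 : (i : ℕ) < k then w ⟨(i : ℕ) + 1, Nat.lt_of_le_of_lt h2 h⟩
    else w i)

section coords
variable {n : ℕ} {k : ℕ} (h : k < n) (z : EuclideanSpace ℂ (Fin n)) (i : Fin n)

lemma rhoMap_apply_zero (hi : (i : ℕ) = 0) :
    rhoMap k h z i = gMap (z ⟨k, h⟩) := by
  unfold rhoMap; dsimp only; rw [if_pos hi]

lemma rhoMap_apply_one (hi : (i : ℕ) = 1) :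
    rhoMap k h z i = fMap (z ⟨0, Nat.lt_of_le_of_lt (Nat.zero_le k) h⟩) := by
  unfold rhoMap; dsimp only; rw [if_neg (by omega), if_pos hi]

lemma rhoMap_apply_mid (h2 : 2 ≤ (i : ℕ)) (hik : (i : ℕ) ≤ k) :
    rhoMap k h z i = z ⟨(i : ℕ) - 1, Nat.lt_of_le_of_lt (Nat.sub_le _ _) i.isLt⟩ := by
  unfold rhoMap; dsimp only; rw [if_neg (by omega), if_neg (by omega), if_pos hik]

lemma rhoMap_apply_top (hik : k < (i : ℕ)) (hk : 1 ≤ k) :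
    rhoMap k h z i = z i := by
  unfold rhoMap; dsimp only; rw [if_neg (by omega), if_neg (by omega), if_neg (by omega)]

lemma sigmaMap_apply_zero (hk : 1 ≤ k) (hi : (i : ℕ) = 0) :
    sigmaMap k h hk z i = gMap (z ⟨1, Nat.lt_of_le_of_lt hk h⟩) := by
  unfold sigmaMap; dsimp only; rw [if_pos hi]

lemma sigmaMap_apply_k (hk : 1 ≤ k) (hi : (i : ℕ) = k) :
    sigmaMap k h hk z i = fMap (z ⟨0, Nat.lt_of_le_of_lt (Nat.zero_le k) h⟩) := by
  unfold sigmaMap; dsimp only; rw [if_neg (by omega), if_pos hi]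

lemma sigmaMap_apply_mid (hk : 1 ≤ k) (h1 : 1 ≤ (i : ℕ)) (h2 : (i : ℕ) < k) :
    sigmaMap k h hk z i = z ⟨(i : ℕ) + 1, Nat.lt_of_le_of_lt h2 h⟩ := by
  unfold sigmaMap; dsimp only; rw [if_neg (by omega), if_neg (by omega), dif_pos h2]

lemma sigmaMap_apply_top (hk : 1 ≤ k) (h1 : k < (i : ℕ)) :
    sigmaMap k h hk z i = z i := by
  unfold sigmaMap; dsimp only; rw [if_neg (by omega), if_neg (by omega), dif_neg (by omega)]

end coords

section actcoords
variable {n k : ℕ} (t : Fin k → ℝ) (z : EuclideanSpace ℂ (Fin n)) (i : Fin n)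

lemma actOne_apply_lt (hi : (i : ℕ) < k) :
    actOne k t z i = Complex.exp ((2 * t ⟨i, hi⟩ : ℝ) * Complex.I) * z i := by
  unfold actOne; dsimp only; rw [dif_pos hi]

lemma actOne_apply_ge (hi : k ≤ (i : ℕ)) : actOne k t z i = z i := by
  unfold actOne; dsimp only; rw [dif_neg (by omega)]

lemma actTwo_apply_mid (h1 : 1 ≤ (i : ℕ)) (h2 : (i : ℕ) ≤ k) :
    actTwo k t z i
      = Complex.exp ((2 * t ⟨(i : ℕ) - 1, by omega⟩ : ℝ) * Complex.I) * z i := by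
  unfold actTwo; dsimp only; rw [dif_pos ⟨h1, h2⟩]

lemma actTwo_apply_out (hi : (i : ℕ) = 0 ∨ k < (i : ℕ)) : actTwo k t z i = z i := by
  unfold actTwo; dsimp only; rw [dif_neg (by omega)]

end actcoords

lemma contDiff_eval {n : ℕ} (j : Fin n) :
    ContDiff ℝ (⊤ : ℕ∞) (fun z : EuclideanSpace ℂ (Fin n) => z j) :=
  ((EuclideanSpace.proj j : EuclideanSpace ℂ (Fin n) →L[ℂ] ℂ).restrictScalars ℝ).contDiff

lemma contDiffOn_euclidean_aux {n : ℕ} {F : EuclideanSpace ℂ (Fin n) → EuclideanSpace ℂ (Fin n)}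
    {s : Set (EuclideanSpace ℂ (Fin n))}
    (h : ∀ i, ContDiffOn ℝ (⊤ : ℕ∞) (fun z => F z i) s) : ContDiffOn ℝ (⊤ : ℕ∞) F s := by
  let L := PiLp.continuousLinearEquiv 2 ℝ (fun _ : Fin n => ℂ)
  have h2 : ContDiffOn ℝ (⊤ : ℕ∞) (fun z => L (F z)) s := contDiffOn_pi.2 h
  exact L.symm.contDiff.comp_contDiffOn h2

/-- `(Z^{2n}, φ₁)` and `(Z^{2n}, φ₂)` are `ℝ^k`-equivariantly diffeomorphic. -/
theorem equivariant_diffeomorphism_of_cylinder_actions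
    (n k : ℕ) (hn : 2 ≤ n) (hk : 1 ≤ k) (hkn : k ≤ n - 1) :
    ∃ ρ σ : EuclideanSpace ℂ (Fin n) → EuclideanSpace ℂ (Fin n),
      ContDiffOn ℝ (⊤ : ℕ∞) ρ (cylinder n) ∧
      ContDiffOn ℝ (⊤ : ℕ∞) σ (cylinder n) ∧
      Set.MapsTo ρ (cylinder n) (cylinder n) ∧
      Set.MapsTo σ (cylinder n) (cylinder n) ∧
      (∀ z ∈ cylinder n, σ (ρ z) = z) ∧
      (∀ z ∈ cylinder n, ρ (σ z) = z) ∧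
      (∀ (t : Fin k → ℝ), ∀ z ∈ cylinder n,
        ρ (actOne k t z) = actTwo k t (ρ z)) := by
  have hkn' : k < n := by omega
  have h0n : (0 : ℕ) < n := by omega
  have h1n : (1 : ℕ) < n := by omega
  set i0 : Fin n := ⟨0, h0n⟩ with hi0
  have hnormSq : ∀ z ∈ cylinder n, Complex.normSq (z i0) < 1 := by
    intro z hz
    exact normSq_lt_one_of_abs (hz i0 rfl)
  refine ⟨rhoMap k hkn', sigmaMap k hkn' hk, ?_, ?_, ?_, ?_, ?_, ?_, ?_⟩
  · -- smoothness of ρ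
    apply contDiffOn_euclidean_aux
    intro i
    by_cases hi : (i : ℕ) = 0
    · have : (fun z : EuclideanSpace ℂ (Fin n) => rhoMap k hkn' z i)
          = fun z => gMap (z ⟨k, hkn'⟩) := funext fun z => rhoMap_apply_zero hkn' z i hi
      rw [this]
      exact (gMap_contDiff.comp (contDiff_eval _)).contDiffOn
    by_cases hi1 : (i : ℕ) = 1
    · have : (fun z : EuclideanSpace ℂ (Fin n) => rhoMap k hkn' z i)
          = fun z => fMap (z ⟨0, Nat.lt_of_le_of_lt (Nat.zero_le k) hkn'⟩) :=
        funext fun z => rhoMap_apply_one hkn' z i hi1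
      rw [this]
      intro z hz
      exact ((fMap_contDiffAt (hnormSq z hz)).comp z
        (contDiff_eval _).contDiffAt).contDiffWithinAt
    by_cases hik : (i : ℕ) ≤ k
    · have : (fun z : EuclideanSpace ℂ (Fin n) => rhoMap k hkn' z i)
          = fun z => z ⟨(i : ℕ) - 1, Nat.lt_of_le_of_lt (Nat.sub_le _ _) i.isLt⟩ :=
        funext fun z => rhoMap_apply_mid hkn' z i (by omega) hik
      rw [this]
      exact (contDiff_eval _).contDiffOn
    · have : (fun z : EuclideanSpace ℂ (Fin n) => rhoMap k hkn' z i)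
          = fun z => z i := funext fun z => rhoMap_apply_top hkn' z i (by omega) hk
      rw [this]
      exact (contDiff_eval _).contDiffOn
  · -- smoothness of σ
    apply contDiffOn_euclidean_aux
    intro i
    by_cases hi : (i : ℕ) = 0
    · have : (fun z : EuclideanSpace ℂ (Fin n) => sigmaMap k hkn' hk z i)
          = fun z => gMap (z ⟨1, Nat.lt_of_le_of_lt hk hkn'⟩) :=
        funext fun z => sigmaMap_apply_zero hkn' z i hk hi
      rw [this]
      exact (gMap_contDiff.comp (contDiff_eval _)).contDiffOn
    by_cases hik : (i : ℕ) = k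
    · have : (fun z : EuclideanSpace ℂ (Fin n) => sigmaMap k hkn' hk z i)
          = fun z => fMap (z ⟨0, Nat.lt_of_le_of_lt (Nat.zero_le k) hkn'⟩) :=
        funext fun z => sigmaMap_apply_k hkn' z i hk hik
      rw [this]
      intro z hz
      exact ((fMap_contDiffAt (hnormSq z hz)).comp z
        (contDiff_eval _).contDiffAt).contDiffWithinAt
    by_cases hlt : (i : ℕ) < k
    · have : (fun z : EuclideanSpace ℂ (Fin n) => sigmaMap k hkn' hk z i)
          = fun z => z ⟨(i : ℕ) + 1, Nat.lt_of_le_of_lt hlt hkn'⟩ :=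
        funext fun z => sigmaMap_apply_mid hkn' z i hk (by omega) hlt
      rw [this]
      exact (contDiff_eval _).contDiffOn
    · have : (fun z : EuclideanSpace ℂ (Fin n) => sigmaMap k hkn' hk z i)
          = fun z => z i := funext fun z => sigmaMap_apply_top hkn' z i hk (by omega)
      rw [this]
      exact (contDiff_eval _).contDiffOn
  · -- ρ maps cylinder to cylinder
    intro z _ i hi
    rw [rhoMap_apply_zero hkn' z i hi]
    exact abs_gMap_lt _
  · -- σ maps cylinder to cylinder
    intro z _ i hi
    rw [sigmaMap_apply_zero hkn' z i hk hi]
    exact abs_gMap_lt _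
  · -- σ ∘ ρ = id
    intro z hz
    ext i
    show sigmaMap k hkn' hk (rhoMap k hkn' z) i = z i
    by_cases hi : (i : ℕ) = 0
    · rw [sigmaMap_apply_zero hkn' _ i hk hi,
        rhoMap_apply_one hkn' z _ rfl, gMap_fMap (hnormSq z hz)]
      exact congrArg (WithLp.ofLp z) (Fin.ext (by show (0 : ℕ) = (i : ℕ); omega))
    by_cases hik : (i : ℕ) = k
    · rw [sigmaMap_apply_k hkn' _ i hk hik,
        rhoMap_apply_zero hkn' z _ rfl, fMap_gMap]
      exact congrArg (WithLp.ofLp z) (Fin.ext (by show k = (i : ℕ); omega))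
    by_cases hlt : (i : ℕ) < k
    · rw [sigmaMap_apply_mid hkn' _ i hk (by omega) hlt,
        rhoMap_apply_mid hkn' z _ (by show 2 ≤ (i : ℕ) + 1; omega)
          (by show (i : ℕ) + 1 ≤ k; omega)]
      exact congrArg (WithLp.ofLp z) (Fin.ext (by show (i : ℕ) + 1 - 1 = (i : ℕ); omega))
    · rw [sigmaMap_apply_top hkn' _ i hk (by omega),
        rhoMap_apply_top hkn' z i (by omega) hk]
  · -- ρ ∘ σ = id
    intro z hz
    ext i
    show rhoMap k hkn' (sigmaMap k hkn' hk z) i = z i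
    by_cases hi : (i : ℕ) = 0
    · rw [rhoMap_apply_zero hkn' _ i hi,
        sigmaMap_apply_k hkn' z _ hk rfl, gMap_fMap (hnormSq z hz)]
      exact congrArg (WithLp.ofLp z) (Fin.ext (by show (0 : ℕ) = (i : ℕ); omega))
    by_cases hi1 : (i : ℕ) = 1
    · rw [rhoMap_apply_one hkn' _ i hi1,
        sigmaMap_apply_zero hkn' z _ hk rfl, fMap_gMap]
      exact congrArg (WithLp.ofLp z) (Fin.ext (by show (1 : ℕ) = (i : ℕ); omega))
    by_cases hik : (i : ℕ) ≤ k
    · rw [rhoMap_apply_mid hkn' _ i (by omega) hik,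
        sigmaMap_apply_mid hkn' z _ hk (by show 1 ≤ (i : ℕ) - 1; omega)
          (by show (i : ℕ) - 1 < k; omega)]
      exact congrArg (WithLp.ofLp z) (Fin.ext (by show (i : ℕ) - 1 + 1 = (i : ℕ); omega))
    · rw [rhoMap_apply_top hkn' _ i (by omega) hk,
        sigmaMap_apply_top hkn' z i hk (by omega)]
  · -- equivariance
    intro t z _
    ext i
    show rhoMap k hkn' (actOne k t z) i = actTwo k t (rhoMap k hkn' z) i
    by_cases hi : (i : ℕ) = 0
    · rw [rhoMap_apply_zero hkn' _ i hi, actTwo_apply_out t _ i (Or.inl hi),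
        rhoMap_apply_zero hkn' z i hi, actOne_apply_ge t z _ (by show k ≤ k; omega)]
    by_cases hi1 : (i : ℕ) = 1
    · rw [rhoMap_apply_one hkn' _ i hi1,
        actTwo_apply_mid t _ i (by omega) (by omega),
        rhoMap_apply_one hkn' z i hi1,
        actOne_apply_lt t z _ (by show (0 : ℕ) < k; omega),
        fMap_unit_mul (normSq_exp_mul_I _)]
      simp only [show (i : ℕ) - 1 = 0 from by omega]
    by_cases hik : (i : ℕ) ≤ k
    · rw [rhoMap_apply_mid hkn' _ i (by omega) hik,
        actTwo_apply_mid t _ i (by omega) hik,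
        rhoMap_apply_mid hkn' z i (by omega) hik,
        actOne_apply_lt t z _ (by show (i : ℕ) - 1 < k; omega)]
    · rw [rhoMap_apply_top hkn' _ i (by omega) hk,
        actTwo_apply_out t _ i (Or.inr (by omega)),
        rhoMap_apply_top hkn' z i (by omega) hk,
        actOne_apply_ge t z i (by omega)]
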